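/- arXiv:1401.7942 — 2 statements merged into one kernel-verified Lean document; each statement's English description precedes it below -/
import Mathlib

section
/- Let λ ≠ 0, λ ≠ −1, and let u, q : ℝ³ → ℝ be smooth functions of (t,x,y) with q_x nowhere vanishing, satisfying q_t = λ u_t q_x/(λ+1) and q_y = λ u_y q_x. Then q satisfies the ABC-type equation q_y q_{tx} = (λ+1) q_t q_{xy} − λ q_x q_{ty}. -/
/-- Partial derivative of `f : (Fin n → ℝ) → ℝ` in the `i`-th coordinate direction. -/
noncomputable def pd (n : ℕ) (i : Fin n) (f : (Fin n → ℝ) → ℝ) : (Fin n → ℝ) → ℝ :=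
  fun p => fderiv ℝ f p (Pi.single i 1)

lemma pd_contDiff {n : ℕ} {f : (Fin n → ℝ) → ℝ} (hf : ContDiff ℝ (⊤ : ℕ∞) f) (i : Fin n) :
    ContDiff ℝ (⊤ : ℕ∞) (pd n i f) := by
  unfold pd
  exact (hf.fderiv_right (by simp)).clm_apply contDiff_const

lemma pd_congr {n : ℕ} {f g : (Fin n → ℝ) → ℝ} (h : ∀ p, f p = g p) (i : Fin n) :
    pd n i f = pd n i g := by
  unfold pd; rw [funext h]

lemma pd_const_mul {n : ℕ} {f : (Fin n → ℝ) → ℝ} (hf : ContDiff ℝ (⊤ : ℕ∞) f) (c : ℝ) (i : Fin n)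
    (p : Fin n → ℝ) : pd n i (fun x => c * f x) p = c * pd n i f p := by
  unfold pd
  rw [fderiv_const_mul (hf.differentiable (by simp)).differentiableAt]
  simp

lemma pd_mul {n : ℕ} {f g : (Fin n → ℝ) → ℝ} (hf : ContDiff ℝ (⊤ : ℕ∞) f) (hg : ContDiff ℝ (⊤ : ℕ∞) g)
    (i : Fin n) (p : Fin n → ℝ) :
    pd n i (fun x => f x * g x) p = pd n i f p * g p + f p * pd n i g p := by
  unfold pd
  rw [fderiv_fun_mul (hf.differentiable (by simp)).differentiableAt
    (hg.differentiable (by simp)).differentiableAt]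
  simp; ring

lemma pd_comm {n : ℕ} {f : (Fin n → ℝ) → ℝ} (hf : ContDiff ℝ (⊤ : ℕ∞) f) (i j : Fin n)
    (p : Fin n → ℝ) : pd n i (pd n j f) p = pd n j (pd n i f) p := by
  have hdf : ContDiff ℝ (⊤ : ℕ∞) (fderiv ℝ f) := hf.fderiv_right (by simp)
  have key : ∀ (a b : Fin n), pd n a (pd n b f) p
      = fderiv ℝ (fderiv ℝ f) p (Pi.single a 1) (Pi.single b 1) := by
    intro a b
    unfold pd
    rw [fderiv_clm_apply (hdf.differentiable (by simp)).differentiableAt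
      (differentiableAt_const _)]
    simp
  rw [key i j, key j i]
  exact second_derivative_symmetric
    (fun y => (hf.differentiable (by simp) y).hasFDerivAt)
    ((hdf.differentiable (by simp) p).hasFDerivAt) _ _

/-- 3D coordinates `(t,x,y) = (0,1,2)`. Eliminating `u` from the Lax pair
`q_t = λ u_t q_x/(λ+1)`, `q_y = λ u_y q_x` yields the ABC-type equation
`q_y q_tx = (λ+1) q_t q_xy − λ q_x q_ty`. -/
theorem stmt_4 (u q : (Fin 3 → ℝ) → ℝ) (hu : ContDiff ℝ (⊤ : ℕ∞) u) (hq : ContDiff ℝ (⊤ : ℕ∞) q)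
    (lam : ℝ) (hlam : lam ≠ 0) (hlam' : lam ≠ -1)
    (hqx : ∀ p, pd 3 1 q p ≠ 0)
    (h1 : ∀ p, pd 3 0 q p = lam * pd 3 0 u p * pd 3 1 q p / (lam + 1))
    (h2 : ∀ p, pd 3 2 q p = lam * pd 3 2 u p * pd 3 1 q p) :
    ∀ p, pd 3 2 q p * pd 3 1 (pd 3 0 q) p
        = (lam + 1) * pd 3 0 q p * pd 3 2 (pd 3 1 q) p
          - lam * pd 3 1 q p * pd 3 2 (pd 3 0 q) p := by
  have hl1 : lam + 1 ≠ 0 := by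
    intro h; apply hlam'; linarith
  intro p
  have hut : ContDiff ℝ (⊤ : ℕ∞) (pd 3 0 u) := pd_contDiff hu 0
  have huy : ContDiff ℝ (⊤ : ℕ∞) (pd 3 2 u) := pd_contDiff hu 2
  have hqx' : ContDiff ℝ (⊤ : ℕ∞) (pd 3 1 q) := pd_contDiff hq 1
  -- rewrite h1 as a clean equality of functions
  have h1' : ∀ x, pd 3 0 q x = (lam / (lam + 1)) * (pd 3 0 u x * pd 3 1 q x) := by
    intro x; rw [h1 x]; field_simp
  have h2' : ∀ x, pd 3 2 q x = lam * (pd 3 2 u x * pd 3 1 q x) := by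
    intro x; rw [h2 x]; ring
  -- differentiate h1 in direction y (=2)
  have E1 : pd 3 2 (pd 3 0 q) p
      = (lam / (lam + 1)) * (pd 3 2 (pd 3 0 u) p * pd 3 1 q p
        + pd 3 0 u p * pd 3 2 (pd 3 1 q) p) := by
    rw [pd_congr h1' 2, pd_const_mul (hut.mul hqx') _ 2, pd_mul hut hqx' 2]
  -- differentiate h2 in direction t (=0)
  have E2 : pd 3 0 (pd 3 2 q) p
      = lam * (pd 3 0 (pd 3 2 u) p * pd 3 1 q p
        + pd 3 2 u p * pd 3 0 (pd 3 1 q) p) := by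
    rw [pd_congr h2' 0, pd_const_mul (huy.mul hqx') _ 0, pd_mul huy hqx' 0]
  rw [pd_comm hu 0 2 p, pd_comm hq 0 2 p, pd_comm hq 0 1 p] at E2
  have h1p := h1 p
  have h2p := h2 p
  have E1' : (lam + 1) * pd 3 2 (pd 3 0 q) p
      = lam * (pd 3 2 (pd 3 0 u) p * pd 3 1 q p + pd 3 0 u p * pd 3 2 (pd 3 1 q) p) := by
    rw [E1]; field_simp
  have h1p' : (lam + 1) * pd 3 0 q p = lam * pd 3 0 u p * pd 3 1 q p := by
    rw [h1p]; field_simp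
  linear_combination (pd 3 1 q p) * E1' - (pd 3 1 q p) * E2
    + (pd 3 1 (pd 3 0 q) p) * h2p - (pd 3 2 (pd 3 1 q) p) * h1p'
end

section
/- Let λ ≠ 0, λ ≠ −1, and let u, q : ℝ³ → ℝ be smooth in (t,x,y) with q satisfying q_t = λ u_t q_x/(λ+1) and q_y = λ u_y q_x, and with u_t u_y q_x nowhere vanishing. Then the mixed-partial compatibility (q_t)_y = (q_y)_t, after eliminating the first derivatives q_t and q_y using the system, is equivalent to u satisfying u_{ty} = u_t u_{xy} − u_y u_{tx}. -/
/-- 3D coordinates `(t,x,y) = (0,1,2)`. For the Lax pair `q_t = λ u_t q_x/(λ+1)`,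
`q_y = λ u_y q_x`, the mixed-partial compatibility `(q_t)_y = (q_y)_t` — after
eliminating all first derivatives of `q` in `t` and `y` using the system — is equivalent
to `u_ty = u_t u_xy − u_y u_tx`. -/
theorem stmt_17 (u q : (Fin 3 → ℝ) → ℝ) (hu : ContDiff ℝ (⊤ : ℕ∞) u) (hq : ContDiff ℝ (⊤ : ℕ∞) q)
    (lam : ℝ) (hlam : lam ≠ 0) (hlam' : lam ≠ -1)
    (hnv : ∀ p, pd 3 0 u p * pd 3 2 u p * pd 3 1 q p ≠ 0)
    (h1 : ∀ p, pd 3 0 q p = lam * pd 3 0 u p * pd 3 1 q p / (lam + 1))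
    (h2 : ∀ p, pd 3 2 q p = lam * pd 3 2 u p * pd 3 1 q p) :
    ∀ p, ((lam / (lam + 1))
          * (pd 3 2 (pd 3 0 u) p * pd 3 1 q p
            + pd 3 0 u p * (lam * (pd 3 2 (pd 3 1 u) p * pd 3 1 q p
                + pd 3 2 u p * pd 3 1 (pd 3 1 q) p)))
        = lam * (pd 3 2 (pd 3 0 u) p * pd 3 1 q p
            + pd 3 2 u p * ((lam / (lam + 1))
              * (pd 3 0 (pd 3 1 u) p * pd 3 1 q p
                + pd 3 0 u p * pd 3 1 (pd 3 1 q) p))))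
      ↔ pd 3 2 (pd 3 0 u) p
          = pd 3 0 u p * pd 3 2 (pd 3 1 u) p - pd 3 2 u p * pd 3 0 (pd 3 1 u) p := by
  intro p
  have hQ : pd 3 1 q p ≠ 0 := fun h => hnv p (by simp [h])
  have hl1 : lam + 1 ≠ 0 := fun h => hlam' (by linarith)
  set a := pd 3 2 (pd 3 0 u) p
  set A := pd 3 0 u p
  set B := pd 3 2 u p
  set C := pd 3 2 (pd 3 1 u) p
  set D := pd 3 0 (pd 3 1 u) p
  set Q := pd 3 1 q p
  set R := pd 3 1 (pd 3 1 q) p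
  constructor
  · intro h
    field_simp at h
    rcases (Or.inl h : _ ∨ lam = 0) with h | h
    · -- h is polynomial
      have key : lam * Q * (a + B * D - A * C) = 0 := by linear_combination -h
      have h2 : a + B * D - A * C = 0 := by
        rcases mul_eq_zero.mp key with h' | h'
        · exact absurd h' (mul_ne_zero hlam hQ)
        · exact h'
      linarith
    · exact absurd h hlam
  · intro h
    field_simp
    linear_combination -lam * Q * h
end
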